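/- For c ∈ (0,1], p ∈ [0,1], and q₁ ≤ q₂ in [p, 1], the difference c·d(p,q) − d(c·p, c·q) is nondecreasing in q on [p, 1) ∩ {q : cq < 1}; in particular d(c·p, c·q) ≤ c·d(p,q) for all q ≥ p. -/

import Mathlib

/-!
Scaling both arguments by `c` multiplies the `p log (p / q)` part of `d(p, q)` by exactly `c`,
so `c d(p, q) - d(c p, c q)` equals a constant plus
`(1 - c p) log (1 - c q) - c (1 - p) log (1 - q)`, whose derivative in `q` is
`c (1 - c) (q - p) / ((1 - q) (1 - c q)) ≥ 0`. Both sides of the inequality vanish at `q = p`.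
-/

open scoped BigOperators

/-- Bernoulli KL divergence `d(p,q)` with continuous extension to the boundary:
`⊤` when `q ∈ {0,1}` and `p ≠ q` there. -/
noncomputable def klBer (p q : ℝ) : EReal :=
  if (q = 0 ∧ p ≠ 0) ∨ (q = 1 ∧ p ≠ 1) then ⊤
  else ((p * Real.log (p / q) + (1 - p) * Real.log ((1 - p) / (1 - q)) : ℝ) : EReal)

/-- Real-valued Bernoulli KL divergence formula (valid where finite). -/
noncomputable def klBerR (p q : ℝ) : ℝ :=
  p * Real.log (p / q) + (1 - p) * Real.log ((1 - p) / (1 - q))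

open Real Set

lemma klBerR_self (x : ℝ) : klBerR x x = 0 := by
  rcases eq_or_ne x 0 with rfl | h0
  · simp [klBerR]
  rcases eq_or_ne x 1 with rfl | h1
  · simp [klBerR]
  · simp [klBerR, div_self h0, div_self (sub_ne_zero.mpr h1.symm)]

lemma klBer_self (x : ℝ) : klBer x x = 0 := by
  rw [klBer, if_neg (by tauto)]
  exact_mod_cast klBerR_self x

lemma klBer_one_of_ne {p : ℝ} (hp : p ≠ 1) : klBer p 1 = ⊤ :=
  if_pos (Or.inr ⟨rfl, hp⟩)

lemma klBer_eq_klBerR {p q : ℝ} (hp : 0 ≤ p) (hpq : p ≤ q) (hq : q < 1) :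
    klBer p q = klBerR p q := by
  rw [klBer, if_neg]
  · rfl
  rintro (⟨rfl, hp0⟩ | ⟨rfl, -⟩)
  exacts [hp0 (le_antisymm hpq hp), hq.false]

lemma mul_klBerR_sub_klBerR_mul {c p q : ℝ} (hc : c ≠ 0) (hp : p ≠ 1) (hq : q ≠ 1)
    (hcp : c * p ≠ 1) (hcq : c * q ≠ 1) :
    c * klBerR p q - klBerR (c * p) (c * q) =
      c * (1 - p) * log (1 - p) - (1 - c * p) * log (1 - c * p) +
        ((1 - c * p) * log (1 - c * q) - c * (1 - p) * log (1 - q)) := by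
  rw [klBerR, klBerR, mul_div_mul_left p q hc,
    log_div (sub_ne_zero.mpr hp.symm) (sub_ne_zero.mpr hq.symm),
    log_div (sub_ne_zero.mpr hcp.symm) (sub_ne_zero.mpr hcq.symm)]
  ring

lemma hasDerivAt_log_one_sub_mul {a x : ℝ} (h : a * x ≠ 1) :
    HasDerivAt (fun q => log (1 - a * q)) (-a / (1 - a * x)) x := by
  simpa using (((hasDerivAt_id x).const_mul a).const_sub 1).log (sub_ne_zero.mpr h.symm)

lemma mul_lt_one_of_le_one_of_lt_one {c x : ℝ} (hc0 : 0 ≤ c) (hc1 : c ≤ 1) (hx : x < 1) :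
    c * x < 1 := by
  rcases le_or_gt x 0 with hx0 | hx0 <;> nlinarith

lemma monotoneOn_mul_log_one_sub_mul_sub {c p : ℝ} (hc0 : 0 ≤ c) (hc1 : c ≤ 1) :
    MonotoneOn (fun q => (1 - c * p) * log (1 - c * q) - c * (1 - p) * log (1 - q))
      (Ico p 1) := by
  have hcx {x : ℝ} (hx : x < 1) : 0 < 1 - c * x :=
    sub_pos.mpr (mul_lt_one_of_le_one_of_lt_one hc0 hc1 hx)
  have hderiv {x : ℝ} (hx : x < 1) :
      HasDerivAt (fun q => (1 - c * p) * log (1 - c * q) - c * (1 - p) * log (1 - q))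
        ((1 - c * p) * (-c / (1 - c * x)) - c * (1 - p) * (-1 / (1 - x))) x := by
    have h1 : HasDerivAt (fun q => log (1 - q)) (-1 / (1 - x)) x := by
      simpa using hasDerivAt_log_one_sub_mul (a := 1) (x := x) (by linarith)
    exact ((hasDerivAt_log_one_sub_mul (sub_pos.mp (hcx hx)).ne).const_mul _).sub (h1.const_mul _)
  refine monotoneOn_of_hasDerivWithinAt_nonneg (convex_Ico p 1)
    (fun x hx => (hderiv hx.2).continuousAt.continuousWithinAt)
    (fun x hx => (hderiv (interior_subset hx).2).hasDerivWithinAt) fun x hx => ?_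
  rw [interior_Ico] at hx
  have hx1 : 0 < 1 - x := sub_pos.mpr hx.2
  have hcx1 := hcx hx.2
  have hpx : 0 ≤ x - p := sub_nonneg.mpr hx.1.le
  have hderiv_eq : (1 - c * p) * (-c / (1 - c * x)) - c * (1 - p) * (-1 / (1 - x)) =
      c * (1 - c) * (x - p) / ((1 - x) * (1 - c * x)) := by
    field_simp
    ring
  rw [hderiv_eq]
  positivity

lemma monotoneOn_mul_klBerR_sub_klBerR_mul {c p : ℝ} (hc0 : 0 < c) (hc1 : c ≤ 1) :
    MonotoneOn (fun q => c * klBerR p q - klBerR (c * p) (c * q))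
      (Ico p 1 ∩ {q | c * q < 1}) := by
  have hdecomp {q : ℝ} (hpq : p ≤ q) (hq1 : q < 1) :
      c * klBerR p q - klBerR (c * p) (c * q) =
        c * (1 - p) * log (1 - p) - (1 - c * p) * log (1 - c * p) +
          ((1 - c * p) * log (1 - c * q) - c * (1 - p) * log (1 - q)) :=
    mul_klBerR_sub_klBerR_mul hc0.ne' (hpq.trans_lt hq1).ne hq1.ne
      (mul_lt_one_of_le_one_of_lt_one hc0.le hc1 (hpq.trans_lt hq1)).ne
      (mul_lt_one_of_le_one_of_lt_one hc0.le hc1 hq1).ne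
  intro a ⟨⟨hpa, ha1⟩, _⟩ b ⟨⟨hpb, hb1⟩, _⟩ hab
  simp only [hdecomp hpa ha1, hdecomp hpb hb1]
  exact add_le_add_right (monotoneOn_mul_log_one_sub_mul_sub hc0.le hc1 ⟨hpa, ha1⟩ ⟨hpb, hb1⟩ hab) _

lemma klBerR_mul_le_mul_klBerR {c p q : ℝ} (hc0 : 0 < c) (hc1 : c ≤ 1) (hpq : p ≤ q)
    (hq1 : q < 1) : klBerR (c * p) (c * q) ≤ c * klBerR p q := by
  have hmem {x : ℝ} (hpx : p ≤ x) (hx : x ≤ q) : x ∈ Ico p 1 ∩ {q | c * q < 1} :=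
    ⟨⟨hpx, hx.trans_lt hq1⟩, mul_lt_one_of_le_one_of_lt_one hc0.le hc1 (hx.trans_lt hq1)⟩
  have h := monotoneOn_mul_klBerR_sub_klBerR_mul hc0 hc1 (hmem le_rfl hpq) (hmem hpq le_rfl) hpq
  simp only [klBerR_self, mul_zero, sub_zero] at h
  linarith

theorem kl_diff_monotone (c p : ℝ) (hc : c ∈ Set.Ioc (0 : ℝ) 1)
    (hp : p ∈ Set.Icc (0 : ℝ) 1) :
    MonotoneOn (fun q => c * klBerR p q - klBerR (c * p) (c * q))
      (Set.Ico p 1 ∩ {q | c * q < 1}) ∧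
    ∀ q ∈ Set.Icc p 1, klBer (c * p) (c * q) ≤ (c : EReal) * klBer p q := by
  obtain ⟨hc0, hc1⟩ := hc
  refine ⟨monotoneOn_mul_klBerR_sub_klBerR_mul hc0 hc1, fun q ⟨hpq, hq1⟩ => ?_⟩
  rcases hq1.lt_or_eq with hq1 | rfl
  · rw [klBer_eq_klBerR (mul_nonneg hc0.le hp.1) (mul_le_mul_of_nonneg_left hpq hc0.le)
        (mul_lt_one_of_le_one_of_lt_one hc0.le hc1 hq1), klBer_eq_klBerR hp.1 hpq hq1,
      ← EReal.coe_mul, EReal.coe_le_coe_iff]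
    exact klBerR_mul_le_mul_klBerR hc0 hc1 hpq hq1
  · rcases hp.2.lt_or_eq with hp1 | rfl
    · rw [klBer_one_of_ne hp1.ne, EReal.coe_mul_top_of_pos hc0]
      exact le_top
    · simp [klBer_self]
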